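/- arXiv:2409.11766 — 2 statements merged into one kernel-verified Lean document; each statement's English description precedes it below -/
import Mathlib

section
/- Fix $a \in (0,\pi]$. The set $\{\varphi \in H^2(0,\pi) : \varphi(\pi) = 0,\ \varphi'(0) = 0,\ \varphi'(a) = 0\}$ is dense in the space $H^1_{(\pi)}(0,\pi) = \{\varphi \in H^1(0,\pi) : \varphi(\pi) = 0\}$ with respect to the $H^1$ norm. -/
/-!
Smooth functions vanishing at `0` and `a` are dense in `L²(0, π)`: approximate in `L²` by a
continuous function, then uniformly by a polynomial (Weierstrass), and finally multiply by a smooth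
cutoff vanishing at `0` and `a`, which changes the polynomial only on a set of small measure.
Given such an approximation `h` of `g = φ'`, put `χ t = -∫_t^π h`. Then `χ(π) = 0`,
`φ t - χ t = -∫_t^π (g - h)`, and Cauchy–Schwarz bounds `‖φ - χ‖²` by `π² ‖g - h‖²`.
-/

open MeasureTheory Set Real

open scoped ContDiff

section Cutoff

noncomputable def pointCutoff (s : Finset ℝ) (η x : ℝ) : ℝ :=
  ∏ p ∈ s, smoothTransition (((x - p) / η) ^ 2)

variable (s : Finset ℝ) (η : ℝ)

theorem contDiff_pointCutoff : ContDiff ℝ ∞ (pointCutoff s η) :=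
  contDiff_prod fun _ _ =>
    smoothTransition.contDiff.comp (((contDiff_id.sub contDiff_const).div_const η).pow 2)

theorem pointCutoff_eq_zero {p : ℝ} (hp : p ∈ s) : pointCutoff s η p = 0 :=
  Finset.prod_eq_zero hp (by simp [smoothTransition.zero])

theorem pointCutoff_nonneg (x : ℝ) : 0 ≤ pointCutoff s η x :=
  Finset.prod_nonneg fun _ _ => smoothTransition.nonneg _

theorem pointCutoff_le_one (x : ℝ) : pointCutoff s η x ≤ 1 :=
  Finset.prod_le_one (fun _ _ => smoothTransition.nonneg _) fun _ _ => smoothTransition.le_one _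

theorem pointCutoff_eq_one (hη : 0 < η) {x : ℝ}
    (hx : x ∉ ⋃ p ∈ s, Metric.closedBall p η) : pointCutoff s η x = 1 := by
  refine Finset.prod_eq_one fun p hp => smoothTransition.one_of_one_le ?_
  have hfar : η < |x - p| := by
    simpa [Metric.mem_closedBall, Real.dist_eq] using fun h => hx (mem_biUnion hp h)
  rw [one_le_sq_iff_one_le_abs, abs_div, abs_of_pos hη, one_le_div hη]
  exact hfar.le

theorem volume_real_biUnion_closedBall_le (hη : 0 < η) :
    volume.real (⋃ p ∈ s, Metric.closedBall p η) ≤ s.card * (2 * η) := by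
  refine (measureReal_biUnion_finset_le s _).trans_eq ?_
  simp [measureReal_def, Real.volume_closedBall, hη.le]

theorem setIntegral_sq_sub_mul_pointCutoff_le {I : Set ℝ} (hI : MeasurableSet I) {u : ℝ → ℝ}
    {M : ℝ} (hu : ∀ x ∈ I, |u x| ≤ M) (hη : 0 < η) :
    ∫ x in I, (u x - u x * pointCutoff s η x) ^ 2 ≤ M ^ 2 * (s.card * (2 * η)) := by
  set E := ⋃ p ∈ s, Metric.closedBall p η
  have hE : MeasurableSet E :=
    s.measurableSet_biUnion fun _ _ => Metric.isClosed_closedBall.measurableSet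
  have hEfin : volume E < ⊤ := by
    refine (measure_biUnion_finset_le s _).trans_lt (ENNReal.sum_lt_top.2 fun _ _ => ?_)
    exact measure_closedBall_lt_top
  have pointwise :
      ∀ x ∈ I, (u x - u x * pointCutoff s η x) ^ 2 ≤ E.indicator (fun _ => M ^ 2) x := by
    intro x hx
    by_cases hxE : x ∈ E
    · rw [indicator_of_mem hxE, ← mul_one_sub, mul_pow]
      have hψ : (1 - pointCutoff s η x) ^ 2 ≤ 1 := by
        nlinarith [pointCutoff_nonneg s η x, pointCutoff_le_one s η x]
      have hux := abs_le.1 (hu x hx)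
      exact (mul_le_of_le_one_right (sq_nonneg _) hψ).trans (sq_le_sq' hux.1 hux.2)
    · simp [indicator_of_notMem hxE, pointCutoff_eq_one s η hη hxE]
  calc ∫ x in I, (u x - u x * pointCutoff s η x) ^ 2
      ≤ ∫ x in I, E.indicator (fun _ => M ^ 2) x :=
        integral_mono_of_nonneg (Filter.Eventually.of_forall fun _ => sq_nonneg _)
          ((integrableOn_const hEfin.ne).integrable_indicator hE).integrableOn
          ((ae_restrict_iff' hI).2 (Filter.Eventually.of_forall pointwise))
    _ = volume.real (I ∩ E) * M ^ 2 := by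
        rw [setIntegral_indicator hE, setIntegral_const, smul_eq_mul]
    _ ≤ volume.real E * M ^ 2 := by
        gcongr
        · exact hEfin.ne
        · exact inter_subset_right
    _ ≤ M ^ 2 * (s.card * (2 * η)) := by
        rw [mul_comm]
        gcongr
        exact volume_real_biUnion_closedBall_le s η hη

end Cutoff

section SquareIntegrals

variable {α : Type*} [MeasurableSpace α] {μ : Measure α}

theorem integral_sq_sub_le {f g h : α → ℝ} (hfg : Integrable (fun x => (f x - g x) ^ 2) μ)
    (hgh : Integrable (fun x => (g x - h x) ^ 2) μ) :
    ∫ x, (f x - h x) ^ 2 ∂μ ≤ 2 * ∫ x, (f x - g x) ^ 2 ∂μ + 2 * ∫ x, (g x - h x) ^ 2 ∂μ := by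
  rw [← integral_const_mul, ← integral_const_mul,
    ← integral_add (hfg.const_mul 2) (hgh.const_mul 2)]
  refine integral_mono_of_nonneg (Filter.Eventually.of_forall fun _ => sq_nonneg _)
    ((hfg.const_mul 2).add (hgh.const_mul 2)) (Filter.Eventually.of_forall fun x => ?_)
  nlinarith [sq_nonneg (f x - 2 * g x + h x)]

theorem sq_setIntegral_le {s : Set α} {f : α → ℝ} (hs : μ s ≠ ⊤) (hf : IntegrableOn f s μ)
    (hf2 : IntegrableOn (fun x => f x ^ 2) s μ) :
    (∫ x in s, f x ∂μ) ^ 2 ≤ μ.real s * ∫ x in s, f x ^ 2 ∂μ := by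
  rcases eq_or_ne (μ s) 0 with h0 | h0
  · simp [Measure.restrict_eq_zero.2 h0]
  have jensen := even_two.convexOn_pow.map_set_average_le (continuous_pow 2).continuousOn
    isClosed_univ h0 hs (Filter.Eventually.of_forall fun _ => mem_univ _) hf hf2
  have hpos : 0 < μ.real s := ENNReal.toReal_pos h0 hs
  simp only [setAverage_eq, smul_eq_mul] at jensen
  rw [mul_pow, inv_pow, sq (μ.real s), mul_inv, mul_assoc] at jensen
  rwa [mul_le_mul_iff_right₀ (inv_pos.2 hpos), inv_mul_le_iff₀ hpos] at jensen

end SquareIntegrals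

section Interval

variable {l r : ℝ}

theorem ContinuousOn.memLp_restrict_Ioo {f : ℝ → ℝ} (hf : ContinuousOn f (Icc l r))
    (p : ENNReal) : MemLp f p (volume.restrict (Ioo l r)) := by
  obtain ⟨C, hC⟩ := isCompact_Icc.exists_bound_of_continuousOn hf
  refine (MemLp.of_bound (hf.aestronglyMeasurable measurableSet_Icc) C ?_).mono_measure
    (Measure.restrict_mono Ioo_subset_Icc_self le_rfl)
  exact (ae_restrict_iff' measurableSet_Icc).2 (Filter.Eventually.of_forall hC)

theorem setIntegral_sq_intervalIntegral_le (hlr : l ≤ r) {u : ℝ → ℝ}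
    (hu : MemLp u 2 (volume.restrict (Ioo l r))) :
    ∫ t in Ioo l r, (∫ s in t..r, u s) ^ 2 ≤ (r - l) ^ 2 * ∫ s in Ioo l r, u s ^ 2 := by
  have hu1 : IntegrableOn u (Ioc l r) :=
    (integrableOn_Ioc_iff_integrableOn_Ioo).2 (hu.integrable one_le_two)
  have hu2 : IntegrableOn (fun s => u s ^ 2) (Ioc l r) :=
    (integrableOn_Ioc_iff_integrableOn_Ioo).2 hu.integrable_sq
  have pointwise : ∀ t ∈ Ioo l r,
      ‖(∫ s in t..r, u s) ^ 2‖ ≤ (r - l) * ∫ s in Ioo l r, u s ^ 2 := by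
    intro t ht
    have hsub : Ioc t r ⊆ Ioc l r := Ioc_subset_Ioc_left ht.1.le
    rw [Real.norm_of_nonneg (sq_nonneg _), intervalIntegral.integral_of_le ht.2.le,
      ← integral_Ioc_eq_integral_Ioo]
    calc (∫ s in Ioc t r, u s) ^ 2
        ≤ volume.real (Ioc t r) * ∫ s in Ioc t r, u s ^ 2 :=
          sq_setIntegral_le measure_Ioc_lt_top.ne (hu1.mono_set hsub) (hu2.mono_set hsub)
      _ ≤ (r - l) * ∫ s in Ioc l r, u s ^ 2 := by
          rw [Real.volume_real_Ioc_of_le ht.2.le]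
          gcongr
          · exact ht.1.le
          · exact Filter.Eventually.of_forall fun _ => sq_nonneg _
  calc ∫ t in Ioo l r, (∫ s in t..r, u s) ^ 2
      ≤ ‖∫ t in Ioo l r, (∫ s in t..r, u s) ^ 2‖ := le_norm_self _
    _ ≤ ((r - l) * ∫ s in Ioo l r, u s ^ 2) * volume.real (Ioo l r) :=
        norm_setIntegral_le_of_norm_le_const measure_Ioo_lt_top pointwise
    _ = (r - l) ^ 2 * ∫ s in Ioo l r, u s ^ 2 := by
        rw [Real.volume_real_Ioo_of_le hlr]; ring

end Interval

theorem MeasureTheory.MemLp.exists_continuous_setIntegral_sq_sub_le {α : Type*}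
    [TopologicalSpace α] [R1Space α] [NormalSpace α] [WeaklyLocallyCompactSpace α]
    [MeasurableSpace α] [BorelSpace α]
    {μ : Measure α} [μ.Regular] {s : Set α} (hs : μ s ≠ ⊤) {g : α → ℝ}
    (hg : MemLp g 2 (μ.restrict s)) {δ : ℝ} (hδ : 0 < δ) :
    ∃ f : α → ℝ, Continuous f ∧ MemLp f 2 (μ.restrict s) ∧ ∫ x in s, (g x - f x) ^ 2 ∂μ ≤ δ := by
  have := Measure.Regular.restrict_of_measure_ne_top (μ := μ) hs
  obtain ⟨f, -, hclose, hcont, hmem⟩ :=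
    (ENNReal.ofReal_ofNat 2 ▸ hg).exists_hasCompactSupport_integral_rpow_sub_le two_pos hδ
  refine ⟨f, hcont, ENNReal.ofReal_ofNat 2 ▸ hmem, ?_⟩
  simpa [Real.rpow_two, sq_abs] using hclose

theorem ContinuousOn.exists_contDiff_eq_zero_setIntegral_sq_sub_le {f : ℝ → ℝ} {l r : ℝ}
    (hf : ContinuousOn f (Icc l r)) (s : Finset ℝ) {δ : ℝ} (hδ : 0 < δ) :
    ∃ h : ℝ → ℝ, ContDiff ℝ ∞ h ∧ (∀ p ∈ s, h p = 0) ∧ ∫ x in Ioo l r, (f x - h x) ^ 2 ≤ δ := by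
  set V := volume.real (Ioo l r)
  have hV : 0 ≤ V := measureReal_nonneg
  obtain ⟨q, hq⟩ := exists_polynomial_near_of_continuousOn l r f hf
    (√(δ / (4 * (V + 1)))) (by positivity)
  obtain ⟨M, hM⟩ := isCompact_Icc.exists_bound_of_continuousOn q.continuous.continuousOn
  obtain ⟨η, hη, cutoff_budget⟩ :=
    exists_pos_mul_lt (by positivity : 0 < δ / 4) (M ^ 2 * s.card * 2)
  have hq_smooth : ContDiff ℝ ∞ fun x => q.eval x := by
    simpa using q.contDiff_aeval (𝕜 := ℝ) ∞
  refine ⟨fun x => q.eval x * pointCutoff s η x, hq_smooth.mul (contDiff_pointCutoff s η),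
    fun p hp => by simp [pointCutoff_eq_zero s η hp], ?_⟩
  have polynomial_error : ∫ x in Ioo l r, (f x - q.eval x) ^ 2 ≤ δ / 4 := by
    have pointwise : ∀ x ∈ Ioo l r, ‖(f x - q.eval x) ^ 2‖ ≤ δ / (4 * (V + 1)) := by
      intro x hx
      rw [Real.norm_of_nonneg (sq_nonneg _), ← Real.sq_sqrt (by positivity : 0 ≤ δ / (4 * (V + 1))),
        ← sq_abs, abs_sub_comm]
      exact pow_le_pow_left₀ (abs_nonneg _) (hq x (Ioo_subset_Icc_self hx)).le 2
    calc ∫ x in Ioo l r, (f x - q.eval x) ^ 2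
        ≤ ‖∫ x in Ioo l r, (f x - q.eval x) ^ 2‖ := le_norm_self _
      _ ≤ δ / (4 * (V + 1)) * V := norm_setIntegral_le_of_norm_le_const measure_Ioo_lt_top pointwise
      _ ≤ δ / 4 := by
          rw [div_mul_eq_mul_div, div_le_div_iff₀ (by positivity) (by positivity)]
          nlinarith
  have cutoff_error : ∫ x in Ioo l r, (q.eval x - q.eval x * pointCutoff s η x) ^ 2 ≤ δ / 4 :=
    (setIntegral_sq_sub_mul_pointCutoff_le s η measurableSet_Ioo
      (fun x hx => hM x (Ioo_subset_Icc_self hx)) hη).trans (by linarith)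
  have hfq : Integrable (fun x => (f x - q.eval x) ^ 2) (volume.restrict (Ioo l r)) :=
    ((hf.sub q.continuous.continuousOn).memLp_restrict_Ioo 2).integrable_sq
  have hqh : Integrable (fun x => (q.eval x - q.eval x * pointCutoff s η x) ^ 2)
      (volume.restrict (Ioo l r)) :=
    (((q.continuous.sub (q.continuous.mul (contDiff_pointCutoff s η).continuous)).continuousOn
      (s := Icc l r)).memLp_restrict_Ioo 2).integrable_sq
  linarith [integral_sq_sub_le hfq hqh]

theorem MeasureTheory.MemLp.exists_contDiff_eq_zero_setIntegral_sq_sub_le {g : ℝ → ℝ} {l r : ℝ}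
    (hg : MemLp g 2 (volume.restrict (Ioo l r))) (s : Finset ℝ) {δ : ℝ} (hδ : 0 < δ) :
    ∃ h : ℝ → ℝ, ContDiff ℝ ∞ h ∧ (∀ p ∈ s, h p = 0) ∧ ∫ x in Ioo l r, (g x - h x) ^ 2 ≤ δ := by
  obtain ⟨f, hf, hfL2, hgf⟩ :=
    hg.exists_continuous_setIntegral_sq_sub_le measure_Ioo_lt_top.ne (by positivity : 0 < δ / 4)
  obtain ⟨h, hh, hzero, hfh⟩ :=
    hf.continuousOn.exists_contDiff_eq_zero_setIntegral_sq_sub_le (l := l) (r := r) s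
      (by positivity : 0 < δ / 4)
  refine ⟨h, hh, hzero, ?_⟩
  have hfh_int : Integrable (fun x => (f x - h x) ^ 2) (volume.restrict (Ioo l r)) :=
    ((hf.sub hh.continuous).continuousOn.memLp_restrict_Ioo 2).integrable_sq
  linarith [integral_sq_sub_le (hg.sub hfL2).integrable_sq hfh_int]

theorem eq_neg_intervalIntegral_of_eq_add_intervalIntegral {F f : ℝ → ℝ} {l r : ℝ}
    (hF : ∀ t ∈ Icc l r, F t = F l + ∫ s in l..t, f s) (hFr : F r = 0)
    (hf : IntervalIntegrable f volume l r) {t : ℝ} (ht : t ∈ Icc l r) :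
    F t = -∫ s in t..r, f s := by
  have hFr' := hF r (right_mem_Icc.2 (ht.1.trans ht.2))
  rw [hF t ht, ← intervalIntegral.integral_interval_sub_left hf
    (hf.mono_set (uIcc_subset_uIcc_left (Icc_subset_uIcc ht)))]
  linarith

/-- `H¹` functions are encoded by a continuous representative `φ` together with a weak derivative
`g ∈ L²`; `H²` functions by a `C¹` representative `χ` whose derivative `χ'` is itself `H¹` with
weak second derivative `k ∈ L²`. -/
theorem stmt12_general (a : ℝ) :
    ∀ φ g : ℝ → ℝ,
      ContinuousOn φ (Icc 0 π) →
      (∀ t ∈ Icc 0 π, φ t = φ 0 + ∫ s in (0:ℝ)..t, g s) →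
      MemLp g 2 (volume.restrict (Ioo 0 π)) →
      φ π = 0 →
      ∀ ε > 0, ∃ χ χ' k : ℝ → ℝ,
        ContinuousOn χ (Icc 0 π) ∧
        (∀ t ∈ Icc 0 π, χ t = χ 0 + ∫ s in (0:ℝ)..t, χ' s) ∧
        ContinuousOn χ' (Icc 0 π) ∧
        (∀ t ∈ Icc 0 π, χ' t = χ' 0 + ∫ s in (0:ℝ)..t, k s) ∧
        MemLp k 2 (volume.restrict (Ioo 0 π)) ∧
        χ π = 0 ∧ χ' 0 = 0 ∧ χ' a = 0 ∧
        (∫ s in Ioo 0 π, (φ s - χ s) ^ 2) + (∫ s in Ioo 0 π, (g s - χ' s) ^ 2)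
          < ε ^ 2 := by
  intro φ g _ hφ hg hφπ ε hε
  obtain ⟨h, h_smooth, h_zero, h_close⟩ := hg.exists_contDiff_eq_zero_setIntegral_sq_sub_le {0, a}
    (by positivity : 0 < ε ^ 2 / (2 * (π ^ 2 + 1)))
  have hh : Continuous h := h_smooth.continuous
  have h_int : ∀ u v, IntervalIntegrable h volume u v := hh.intervalIntegrable
  have hg_int : IntervalIntegrable g volume 0 π :=
    (intervalIntegrable_iff_integrableOn_Ioo_of_le pi_pos.le).2 (hg.integrable one_le_two)
  set χ : ℝ → ℝ := fun t => -∫ s in t..π, h s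
  have hχ : ∀ t ∈ Icc 0 π, χ t = χ 0 + ∫ s in (0:ℝ)..t, h s := fun t _ => by
    linarith [intervalIntegral.integral_add_adjacent_intervals (h_int 0 t) (h_int t π)]
  have error_eq : ∫ s in Ioo 0 π, (φ s - χ s) ^ 2
      = ∫ t in Ioo 0 π, (∫ s in t..π, (g s - h s)) ^ 2 := by
    refine setIntegral_congr_fun measurableSet_Ioo fun t ht => ?_
    rw [eq_neg_intervalIntegral_of_eq_add_intervalIntegral hφ hφπ hg_int (Ioo_subset_Icc_self ht),
      intervalIntegral.integral_sub (hg_int.mono_set (uIcc_subset_uIcc_right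
        (Icc_subset_uIcc (Ioo_subset_Icc_self ht)))) (h_int _ _)]
    ring
  have poincare := setIntegral_sq_intervalIntegral_le pi_pos.le
    (hg.sub (hh.continuousOn.memLp_restrict_Ioo 2))
  refine ⟨χ, h, deriv h, (continuous_const.add (intervalIntegral.continuous_primitive
      h_int 0)).continuousOn.congr hχ, hχ, hh.continuousOn, fun t _ => ?_,
    (h_smooth.continuous_deriv (by simp)).continuousOn.memLp_restrict_Ioo 2, by simp [χ],
    h_zero 0 (by simp), h_zero a (by simp), ?_⟩
  · rw [intervalIntegral.integral_deriv_eq_sub (fun x _ => h_smooth.differentiable (by simp) x)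
      ((h_smooth.continuous_deriv (by simp)).intervalIntegrable _ _)]
    ring
  · simp only [Pi.sub_apply, sub_zero] at poincare
    calc _ ≤ (π ^ 2 + 1) * ∫ s in Ioo 0 π, (g s - h s) ^ 2 := by rw [error_eq]; linarith
      _ ≤ (π ^ 2 + 1) * (ε ^ 2 / (2 * (π ^ 2 + 1))) := by gcongr
      _ < ε ^ 2 := by field_simp; linarith [pow_pos hε 2]

/-- for fixed `a ∈ (0,π]`, the set
`{φ ∈ H²(0,π) : φ(π) = 0, φ'(0) = 0, φ'(a) = 0}` is dense, for the `H¹` norm, in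
`H¹_{(π)}(0,π) = {φ ∈ H¹(0,π) : φ(π) = 0}`.  `H¹` functions are represented by a
continuous representative `φ` together with a weak derivative `g ∈ L²`; `H²` functions
by a `C¹` representative `χ` whose derivative `χ'` is itself `H¹` with weak second
derivative `k ∈ L²`. -/
theorem stmt12 (a : ℝ) (ha : a ∈ Ioc 0 π) :
    ∀ φ g : ℝ → ℝ,
      ContinuousOn φ (Icc 0 π) →
      (∀ t ∈ Icc 0 π, φ t = φ 0 + ∫ s in (0:ℝ)..t, g s) →
      MemLp g 2 (volume.restrict (Ioo 0 π)) →
      φ π = 0 →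
      ∀ ε > 0, ∃ χ χ' k : ℝ → ℝ,
        ContinuousOn χ (Icc 0 π) ∧
        (∀ t ∈ Icc 0 π, χ t = χ 0 + ∫ s in (0:ℝ)..t, χ' s) ∧
        ContinuousOn χ' (Icc 0 π) ∧
        (∀ t ∈ Icc 0 π, χ' t = χ' 0 + ∫ s in (0:ℝ)..t, k s) ∧
        MemLp k 2 (volume.restrict (Ioo 0 π)) ∧
        χ π = 0 ∧ χ' 0 = 0 ∧ χ' a = 0 ∧
        (∫ s in Ioo 0 π, (φ s - χ s) ^ 2) + (∫ s in Ioo 0 π, (g s - χ' s) ^ 2)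
          < ε ^ 2 :=
  stmt12_general a
end

section
/- Let $X, U, Y$ be Hilbert spaces and $L : X \to Y$, $R : U \to Y$ bounded linear operators. Then $\operatorname{Range} L \subseteq \operatorname{Range} R$ if and only if there exists $c > 0$ such that $\|L^* y\|_{X} \le c\, \|R^* y\|_{U}$ for all $y \in Y$. -/
/-!
If `Range L ⊆ Range R`, sending `x` to the unique preimage of `L x` in `(ker R)ᗮ` gives a linear
`D` with `L = R D`; it is bounded by the closed graph theorem, and `L* = D* R*` yields the
estimate. Conversely, the estimate makes `R* y ↦ ⟪L x, y⟫` a well-defined bounded functional on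
`Range R*`; extending it by Hahn–Banach and representing it by Riesz as `⟪u, ·⟫` gives
`R u = L x`.
-/

open Filter Topology InnerProductSpace ContinuousLinearMap

section Banach

variable {𝕜 : Type*} [NontriviallyNormedField 𝕜]
  {X U Y : Type*} [NormedAddCommGroup X] [NormedSpace 𝕜 X] [CompleteSpace X]
  [NormedAddCommGroup U] [NormedSpace 𝕜 U] [CompleteSpace U]
  [NormedAddCommGroup Y] [NormedSpace 𝕜 Y]

theorem LinearMap.continuous_of_continuous_comp_injective (D : X →ₗ[𝕜] U) (R : U →L[𝕜] Y)
    (hR : Function.Injective R) (hRD : Continuous (R ∘ D)) : Continuous D := by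
  refine D.continuous_of_seq_closed_graph fun u x v hu hDu => hR ?_
  have hlim₁ : Tendsto (R ∘ D ∘ u) atTop (𝓝 (R v)) := (R.continuous.tendsto v).comp hDu
  have hlim₂ : Tendsto (R ∘ D ∘ u) atTop (𝓝 (R (D x))) := (hRD.tendsto x).comp hu
  exact tendsto_nhds_unique hlim₁ hlim₂

theorem ContinuousLinearMap.exists_eq_comp_of_range_subset_of_injective (L : X →L[𝕜] Y)
    (R : U →L[𝕜] Y) (hR : Function.Injective R) (h : Set.range L ⊆ Set.range R) :
    ∃ D : X →L[𝕜] U, L = R.comp D := by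
  let D : X →ₗ[𝕜] U := ((LinearEquiv.ofInjective (R : U →ₗ[𝕜] Y) hR).symm : _ →ₗ[𝕜] U) ∘ₗ
    (L : X →ₗ[𝕜] Y).codRestrict (LinearMap.range (R : U →ₗ[𝕜] Y)) fun x => h ⟨x, rfl⟩
  have hRD : ∀ x, R (D x) = L x := fun x =>
    LinearEquiv.ofInjective_symm_apply (h := hR) (x := _)
  refine ⟨⟨D, D.continuous_of_continuous_comp_injective R hR ?_⟩, ?_⟩
  · simpa only [Function.comp_def, hRD] using L.continuous
  · ext x
    exact (hRD x).symm

end Banach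

section OrthogonalKer

variable {𝕜 : Type*} [RCLike 𝕜]
  {U Y : Type*} [NormedAddCommGroup U] [InnerProductSpace 𝕜 U]
  [NormedAddCommGroup Y] [NormedSpace 𝕜 Y]

theorem ContinuousLinearMap.injective_comp_orthogonal_ker (R : U →L[𝕜] Y) :
    Function.Injective (R.comp (LinearMap.ker (R : U →ₗ[𝕜] Y))ᗮ.subtypeL) := by
  refine (injective_iff_map_eq_zero _).mpr fun u hu => ?_
  exact Subtype.ext <|
    Submodule.disjoint_def.mp (LinearMap.ker (R : U →ₗ[𝕜] Y)).orthogonal_disjoint u hu u.2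

variable [CompleteSpace U]

theorem ContinuousLinearMap.range_comp_orthogonal_ker (R : U →L[𝕜] Y) :
    Set.range (R.comp (LinearMap.ker (R : U →ₗ[𝕜] Y))ᗮ.subtypeL) = Set.range R := by
  refine subset_antisymm (fun _ ⟨u, hu⟩ => ⟨u, hu⟩) ?_
  rintro _ ⟨u, rfl⟩
  obtain ⟨k, hk, v, hv, rfl⟩ := (LinearMap.ker (R : U →ₗ[𝕜] Y)).exists_add_mem_mem_orthogonal u
  have hRk : R k = 0 := hk
  exact ⟨⟨v, hv⟩, by simp [hRk]⟩

theorem ContinuousLinearMap.exists_eq_comp_of_range_subset {X : Type*} [NormedAddCommGroup X]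
    [NormedSpace 𝕜 X] [CompleteSpace X] (L : X →L[𝕜] Y) (R : U →L[𝕜] Y)
    (h : Set.range L ⊆ Set.range R) : ∃ D : X →L[𝕜] U, L = R.comp D := by
  obtain ⟨D, hD⟩ := L.exists_eq_comp_of_range_subset_of_injective _
    R.injective_comp_orthogonal_ker (R.range_comp_orthogonal_ker ▸ h)
  exact ⟨_, hD.trans (comp_assoc _ _ _)⟩

end OrthogonalKer

theorem ContinuousLinearMap.exists_eq_comp_of_norm_le {𝕜 E F : Type*} [RCLike 𝕜]
    [SeminormedAddCommGroup E] [NormedSpace 𝕜 E] [SeminormedAddCommGroup F] [NormedSpace 𝕜 F]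
    (B : E →L[𝕜] F) (φ : StrongDual 𝕜 E) (C : ℝ) (h : ∀ y, ‖φ y‖ ≤ C * ‖B y‖) :
    ∃ ψ : StrongDual 𝕜 F, φ = ψ.comp B := by
  let B' : E →ₗ[𝕜] F := B
  have hker : LinearMap.ker B' ≤ LinearMap.ker (φ : E →ₗ[𝕜] 𝕜) := fun y hy => by
    have hBy : B y = 0 := hy
    simpa [hBy] using h y
  let f : LinearMap.range B' →ₗ[𝕜] 𝕜 :=
    (LinearMap.ker B').liftQ φ hker ∘ₗ B'.quotKerEquivRange.symm.toLinearMap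
  have hf : ∀ y, f ⟨B' y, LinearMap.mem_range_self B' y⟩ = φ y := fun y => by simp [f]
  have hbound : ∀ v, ‖f v‖ ≤ C * ‖v‖ := by
    rintro ⟨_, y, rfl⟩
    exact (hf y).symm ▸ h y
  obtain ⟨ψ, hψ, -⟩ := exists_extension_norm_eq _ (f.mkContinuous C hbound)
  exact ⟨ψ, ext fun y => (hf y).symm.trans (hψ _).symm⟩

section Douglas

variable {𝕜 : Type*} [RCLike 𝕜]
  {X U Y : Type*} [NormedAddCommGroup X] [InnerProductSpace 𝕜 X] [CompleteSpace X]
  [NormedAddCommGroup U] [InnerProductSpace 𝕜 U] [CompleteSpace U]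
  [NormedAddCommGroup Y] [InnerProductSpace 𝕜 Y] [CompleteSpace Y]

theorem ContinuousLinearMap.exists_norm_adjoint_le_of_range_subset (L : X →L[𝕜] Y)
    (R : U →L[𝕜] Y) (h : Set.range L ⊆ Set.range R) :
    ∃ c > 0, ∀ y, ‖adjoint L y‖ ≤ c * ‖adjoint R y‖ := by
  obtain ⟨D, rfl⟩ := L.exists_eq_comp_of_range_subset R h
  refine ⟨‖D‖ + 1, by positivity, fun y => ?_⟩
  calc ‖adjoint (R.comp D) y‖ = ‖adjoint D (adjoint R y)‖ := by rw [adjoint_comp, comp_apply]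
    _ ≤ ‖adjoint D‖ * ‖adjoint R y‖ := le_opNorm _ _
    _ ≤ (‖D‖ + 1) * ‖adjoint R y‖ := by
      rw [LinearIsometryEquiv.norm_map]
      gcongr
      linarith

theorem ContinuousLinearMap.range_subset_of_norm_adjoint_le (L : X →L[𝕜] Y) (R : U →L[𝕜] Y)
    (c : ℝ) (h : ∀ y, ‖adjoint L y‖ ≤ c * ‖adjoint R y‖) : Set.range L ⊆ Set.range R := by
  rintro _ ⟨x, rfl⟩
  obtain ⟨ψ, hψ⟩ := (adjoint R).exists_eq_comp_of_norm_le (innerSL 𝕜 (L x)) (c * ‖x‖) fun y => by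
    calc ‖inner 𝕜 (L x) y‖ = ‖inner 𝕜 x (adjoint L y)‖ := by rw [adjoint_inner_right]
      _ ≤ ‖x‖ * ‖adjoint L y‖ := norm_inner_le_norm _ _
      _ ≤ c * ‖x‖ * ‖adjoint R y‖ := by nlinarith [h y, norm_nonneg x]
  refine ⟨(toDual 𝕜 U).symm ψ, ext_inner_right 𝕜 fun y => ?_⟩
  rw [← adjoint_inner_right, toDual_symm_apply, ← comp_apply, ← hψ, innerSL_apply_apply]

end Douglas

/-- Douglas range-inclusion lemma: for bounded operators
`L : X → Y`, `R : U → Y` between Hilbert spaces, `Range L ⊆ Range R` if and only if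
there is `c > 0` with `‖L^* y‖ ≤ c ‖R^* y‖` for all `y ∈ Y`. -/
theorem stmt18 {X U Y : Type*}
    [NormedAddCommGroup X] [InnerProductSpace ℝ X] [CompleteSpace X]
    [NormedAddCommGroup U] [InnerProductSpace ℝ U] [CompleteSpace U]
    [NormedAddCommGroup Y] [InnerProductSpace ℝ Y] [CompleteSpace Y]
    (L : X →L[ℝ] Y) (R : U →L[ℝ] Y) :
    Set.range L ⊆ Set.range R ↔
      ∃ c > 0, ∀ y : Y,
        ‖ContinuousLinearMap.adjoint L y‖ ≤ c * ‖ContinuousLinearMap.adjoint R y‖ :=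
  ⟨L.exists_norm_adjoint_le_of_range_subset R,
    fun ⟨c, _, h⟩ => L.range_subset_of_norm_adjoint_le R c h⟩
end
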